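/- Let $n \geq 2$ and let $U \subseteq GL_n(\mathbb{C})$ be the group of unipotent upper triangular matrices. For upper triangular $n \times n$ matrices $A_1 = (a_{ij})$, $A_2 = (b_{ij})$, $A_3 = (c_{ij})$, define $g(A_1,A_2,A_3) = (a_{11}b_{22} - a_{22}b_{11})c_{12} + (c_{11}a_{22} - c_{22}a_{11})b_{12} + (b_{11}c_{22} - b_{22}c_{11})a_{12}$. Then for all $u, v \in U$, $g(u A_1 v^{-1}, u A_2 v^{-1}, u A_3 v^{-1}) = g(A_1, A_2, A_3)$. -/

import Mathlib

/-!
Multiplying an upper triangular matrix on both sides by unitriangular matrices leaves its diagonal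
unchanged and, since `0 ⋖ 1`, moves its `(0, 1)` entry only by a combination of the two diagonal
entries: `(u A w)₀₁ = A₀₀ w₀₁ + A₀₁ + u₀₁ A₁₁`. Now `g(A₁, A₂, A₃)` is the determinant of the
`3 × 3` matrix with rows `(A₀₀, A₁₁, A₀₁)`, so the change adds a combination of the first two
columns to the third and does not affect it.
-/

open Matrix

namespace Matrix.IsUpperTriangular

variable {ι R : Type*} [Fintype ι] [LinearOrder ι]

section Semiring

variable [NonAssocSemiring R] {A B u w : Matrix ι ι R}

theorem mul_apply_self (hA : A.IsUpperTriangular) (hB : B.IsUpperTriangular) (i : ι) :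
    (A * B) i i = A i i * B i i := by
  rw [mul_apply]
  refine Fintype.sum_eq_single i fun k hk => ?_
  rcases hk.lt_or_gt with hki | hik
  · rw [hA hki, zero_mul]
  · rw [hB hik, mul_zero]

theorem mul_apply_of_covBy (hA : A.IsUpperTriangular) (hB : B.IsUpperTriangular) {i j : ι}
    (hij : i ⋖ j) : (A * B) i j = A i i * B i j + A i j * B j j := by
  rw [mul_apply]
  refine Fintype.sum_eq_add i j hij.ne fun k ⟨hki, hkj⟩ => ?_
  rcases hki.lt_or_gt with hki | hik
  · rw [hA hki, zero_mul]
  · rw [hB ((hij.ge_of_gt hik).lt_of_ne' hkj), mul_zero]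

variable (hu : u.IsUpperTriangular) (hud : ∀ i, u i i = 1) (hA : A.IsUpperTriangular)
  (hw : w.IsUpperTriangular) (hwd : ∀ i, w i i = 1)
include hu hud hA hw hwd

theorem unitriangular_mul_mul_apply_self (i : ι) : (u * A * w) i i = A i i := by
  rw [mul_apply_self (hu.mul hA) hw, hu.mul_apply_self hA, hud, hwd, one_mul, mul_one]

theorem unitriangular_mul_mul_apply_of_covBy {i j : ι} (hij : i ⋖ j) :
    (u * A * w) i j = A i i * w i j + A i j + u i j * A j j := by
  rw [mul_apply_of_covBy (hu.mul hA) hw hij, hu.mul_apply_of_covBy hA hij, hu.mul_apply_self hA]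
  simp only [hud, hwd, one_mul, mul_one, add_assoc]

end Semiring

section CommRing

variable [CommRing R] {u : Matrix ι ι R} (hu : u.IsUpperTriangular) (hud : ∀ i, u i i = 1)
include hu hud

theorem isUnit_det_of_diag_eq_one : IsUnit u.det := by
  simp [det_of_isUpperTriangular hu, hud]

theorem inv_of_diag_eq_one : u⁻¹.IsUpperTriangular :=
  have := u.invertibleOfIsUnitDet (isUnit_det_of_diag_eq_one hu hud)
  blockTriangular_inv_of_blockTriangular hu

theorem inv_apply_self_of_diag_eq_one (i : ι) : u⁻¹ i i = 1 := by
  have hinv := congr_fun₂ (mul_nonsing_inv u (isUnit_det_of_diag_eq_one hu hud)) i i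
  rwa [hu.mul_apply_self (inv_of_diag_eq_one hu hud), hud, one_mul, one_apply_eq] at hinv

end CommRing

end Matrix.IsUpperTriangular

theorem stmt1 {n : ℕ} (hn : 2 ≤ n)
    (A₁ A₂ A₃ : Matrix (Fin n) (Fin n) ℂ)
    (hA₁ : ∀ i j : Fin n, j < i → A₁ i j = 0)
    (hA₂ : ∀ i j : Fin n, j < i → A₂ i j = 0)
    (hA₃ : ∀ i j : Fin n, j < i → A₃ i j = 0)
    (u v : Matrix (Fin n) (Fin n) ℂ)
    (hu : ∀ i j : Fin n, j < i → u i j = 0) (hud : ∀ i : Fin n, u i i = 1)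
    (hv : ∀ i j : Fin n, j < i → v i j = 0) (hvd : ∀ i : Fin n, v i i = 1) :
    let i0 : Fin n := ⟨0, by omega⟩
    let i1 : Fin n := ⟨1, by omega⟩
    let g : Matrix (Fin n) (Fin n) ℂ → Matrix (Fin n) (Fin n) ℂ →
        Matrix (Fin n) (Fin n) ℂ → ℂ := fun A B C =>
      (A i0 i0 * B i1 i1 - A i1 i1 * B i0 i0) * C i0 i1
        + (C i0 i0 * A i1 i1 - C i1 i1 * A i0 i0) * B i0 i1
        + (B i0 i0 * C i1 i1 - B i1 i1 * C i0 i0) * A i0 i1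
    g (u * A₁ * v⁻¹) (u * A₂ * v⁻¹) (u * A₃ * v⁻¹) = g A₁ A₂ A₃ := by
  intro i0 i1 g
  have hu : u.IsUpperTriangular := fun i j => hu i j
  have hv : v.IsUpperTriangular := fun i j => hv i j
  have h01 : i0 ⋖ i1 := Fin.covBy_iff.mpr (Order.covBy_succ 0)
  have diag (A : Matrix (Fin n) (Fin n) ℂ) (hA : ∀ i j : Fin n, j < i → A i j = 0) :=
    IsUpperTriangular.unitriangular_mul_mul_apply_self hu hud (fun i j => hA i j)
      (hv.inv_of_diag_eq_one hvd) (hv.inv_apply_self_of_diag_eq_one hvd)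
  have corner (A : Matrix (Fin n) (Fin n) ℂ) (hA : ∀ i j : Fin n, j < i → A i j = 0) :=
    IsUpperTriangular.unitriangular_mul_mul_apply_of_covBy hu hud (fun i j => hA i j)
      (hv.inv_of_diag_eq_one hvd) (hv.inv_apply_self_of_diag_eq_one hvd) h01
  simp only [g, diag A₁ hA₁, diag A₂ hA₂, diag A₃ hA₃, corner A₁ hA₁, corner A₂ hA₂, corner A₃ hA₃]
  ring
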